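/- For any bandit policy π with horizon T over K arms, if the View mechanism V^π satisfies (ε,δ)-DP, then the Table mechanism M^π satisfies (ε, K^T·δ)-DP. -/

import Mathlib

/-!
Statement 0: For any bandit policy π and any ε ≥ 0, the Table mechanism M^π
satisfies ε-DP (i.e. (ε,0)-DP) if and only if the View mechanism V^π satisfies ε-DP.
-/

open scoped BigOperators

/-- A bandit policy for `K` arms: at step `t` (0-indexed), given the history of
(action, reward) pairs, it returns a probability vector over the `K` arms. -/
abbrev BPolicy (K : ℕ) := ℕ → List (Fin K × ℝ) → Fin K → ℝ

/-- The condition that a policy is an actual sequence of probability kernels. -/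
def IsBPolicy {K : ℕ} (π : BPolicy K) : Prop :=
  ∀ t h, (∀ a, 0 ≤ π t h a) ∧ ∑ a, π t h a = 1

/-- Auxiliary coercion of an index `s < t` into `Fin T` (for `t : Fin T`). -/
def Fin.embed {T : ℕ} (t : Fin T) (s : Fin t.val) : Fin T := ⟨s.val, s.isLt.trans t.isLt⟩

/-- The history `(a_1, r_1, …, a_{t-1}, r_{t-1})` built from a sequence of actions `a`
and a sequence of rewards `r`, as seen just before step `t`. -/
def histOf {K T : ℕ} (a : Fin T → Fin K) (r : Fin T → ℝ) (t : Fin T) : List (Fin K × ℝ) :=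
  List.ofFn fun s : Fin t.val => (a (t.embed s), r (t.embed s))

/-- The View mechanism `V^π`: probability that the policy `π`, fed the fixed list of
rewards `r`, produces the sequence of actions `a`:
`V^π_r(a_1,…,a_T) = ∏_t π_t(a_t | a_1, r_1, …, a_{t-1}, r_{t-1})`. -/
noncomputable def viewProb {K T : ℕ} (π : BPolicy K) (r : Fin T → ℝ) (a : Fin T → Fin K) : ℝ :=
  ∏ t : Fin T, π t.val (histOf a r t) (a t)

/-- The Table mechanism `M^π`: probability that the policy `π`, interacting with the
table of (potential) rewards `d`, produces the sequence of actions `a`: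
`M^π_d(a_1,…,a_T) = ∏_t π_t(a_t | a_1, x_{1,a_1}, …, a_{t-1}, x_{t-1,a_{t-1}})`. -/
noncomputable def tableProb {K T : ℕ} (π : BPolicy K) (d : Fin T → Fin K → ℝ)
    (a : Fin T → Fin K) : ℝ :=
  viewProb π (fun s => d s (a s)) a

/-- Two inputs (tables or lists, viewed as functions) are neighbouring when they differ
in exactly one coordinate. -/
def Adjacent {T : ℕ} {α : Type*} (x y : Fin T → α) : Prop :=
  ∃ j, x j ≠ y j ∧ ∀ i, i ≠ j → x i = y i

/-- `(ε,δ)`-differential privacy for a mechanism `M` with finite output space, with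
respect to a neighbouring relation `Neigh`: for all neighbouring inputs and all events
`E`, `M_d(E) ≤ e^ε · M_{d'}(E) + δ`. -/
def IsDP {I Ω : Type*} [Fintype Ω] (M : I → Ω → ℝ) (Neigh : I → I → Prop)
    (ε δ : ℝ) : Prop :=
  ∀ d d', Neigh d d' → ∀ E : Finset Ω,
    ∑ a ∈ E, M d a ≤ Real.exp ε * ∑ a ∈ E, M d' a + δ

/-!
Fix an action sequence `a`. The Table mechanism at `d` assigns to `a` the View probability of
the reward list `s ↦ d s (a s)`, and neighbouring tables give neighbouring or equal reward lists.
View-DP applied to the singleton `{a}` (or, for equal lists, the mass inequality `1 ≤ e^ε + δ`)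
bounds `M_d(a) ≤ e^ε M_{d'}(a) + δ`; summing over an event, which has at most `K^T` elements,
costs `K^T δ`.
-/

open Finset

section DP

variable {I Ω : Type*} [Fintype Ω] {M : I → Ω → ℝ} {Neigh : I → I → Prop} {ε δ : ℝ}

lemma IsDP.nonneg (hM : IsDP M Neigh ε δ) {d d' : I} (hd : Neigh d d') : 0 ≤ δ := by
  simpa using hM d d' hd ∅

lemma IsDP.one_le_exp_add (hM : IsDP M Neigh ε δ) {d d' : I} (hd : Neigh d d')
    (hsum : ∑ a, M d a = 1) (hsum' : ∑ a, M d' a = 1) : 1 ≤ Real.exp ε + δ := by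
  simpa [hsum, hsum'] using hM d d' hd univ

/-- For `ε < 0` this is not automatic: the mass inequality `1 ≤ e^ε + δ` absorbs the loss. -/
lemma le_exp_mul_add_self {x : ℝ} (hδ : 0 ≤ δ) (hεδ : 1 ≤ Real.exp ε + δ)
    (hx₀ : 0 ≤ x) (hx₁ : x ≤ 1) : x ≤ Real.exp ε * x + δ := by
  nlinarith

lemma sum_le_exp_mul_sum_add_card_mul {f g : Ω → ℝ} (hδ : 0 ≤ δ)
    (hfg : ∀ a, f a ≤ Real.exp ε * g a + δ) (E : Finset Ω) :
    ∑ a ∈ E, f a ≤ Real.exp ε * ∑ a ∈ E, g a + Fintype.card Ω * δ := by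
  have hcard : (#E : ℝ) ≤ Fintype.card Ω := by exact_mod_cast card_le_univ E
  calc ∑ a ∈ E, f a
      ≤ ∑ a ∈ E, (Real.exp ε * g a + δ) := sum_le_sum fun a _ => hfg a
    _ = Real.exp ε * ∑ a ∈ E, g a + #E * δ := by
        rw [sum_add_distrib, ← mul_sum, sum_const, nsmul_eq_mul]
    _ ≤ Real.exp ε * ∑ a ∈ E, g a + Fintype.card Ω * δ := by gcongr

end DP

section Adjacent

variable {T : ℕ}

lemma adjacent_zero_single (j : Fin T) : Adjacent (0 : Fin T → ℝ) (Pi.single j 1) :=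
  ⟨j, by simp, fun i hi => by simp [hi]⟩

lemma Adjacent.eq_or_adjacent_diag {α β : Type*} {d d' : Fin T → β → α} (h : Adjacent d d')
    (a : Fin T → β) :
    (fun s => d s (a s)) = (fun s => d' s (a s)) ∨
      Adjacent (fun s => d s (a s)) (fun s => d' s (a s)) := by
  obtain ⟨j, -, hoff⟩ := h
  by_cases hj : d j (a j) = d' j (a j)
  · left
    funext s
    by_cases hs : s = j
    · subst hs; exact hj
    · rw [hoff s hs]
  · exact Or.inr ⟨j, hj, fun i hi => by simp only [hoff i hi]⟩

end Adjacent

section ViewProb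

variable {K : ℕ} {π : BPolicy K}

lemma histOf_snoc_castSucc {T : ℕ} (b : Fin T → Fin K) (k : Fin K) (r : Fin (T + 1) → ℝ)
    (s : Fin T) :
    histOf (Fin.snoc b k) r s.castSucc = histOf b (fun i => r i.castSucc) s := by
  unfold histOf
  congr 1
  funext u
  have hu : (Fin.castSucc s).embed u = Fin.castSucc (s.embed u) := rfl
  rw [hu, Fin.snoc_castSucc]

lemma histOf_snoc_last {T : ℕ} (b : Fin T → Fin K) (k : Fin K) (r : Fin (T + 1) → ℝ) :
    histOf (Fin.snoc b k) r (Fin.last T) = List.ofFn fun s : Fin T => (b s, r s.castSucc) := by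
  unfold histOf
  congr 1
  funext u
  have hu : (Fin.last T).embed u = Fin.castSucc u := rfl
  rw [hu, Fin.snoc_castSucc]

lemma viewProb_snoc {T : ℕ} (r : Fin (T + 1) → ℝ) (b : Fin T → Fin K) (k : Fin K) :
    viewProb π r (Fin.snoc b k) =
      viewProb π (fun i => r i.castSucc) b *
        π T (List.ofFn fun s : Fin T => (b s, r s.castSucc)) k := by
  unfold viewProb
  rw [Fin.prod_univ_castSucc, Fin.snoc_last, histOf_snoc_last]
  congr 1
  refine prod_congr rfl fun t _ => ?_
  rw [histOf_snoc_castSucc, Fin.snoc_castSucc]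
  rfl

lemma viewProb_nonneg (hπ : IsBPolicy π) {T : ℕ} (r : Fin T → ℝ) (a : Fin T → Fin K) : 0 ≤ viewProb π r a :=
  prod_nonneg fun t _ => (hπ t.val (histOf a r t)).1 (a t)

lemma sum_viewProb (hπ : IsBPolicy π) : ∀ {T : ℕ} (r : Fin T → ℝ), ∑ a, viewProb π r a = 1
  | 0, r => by simp [viewProb]
  | T + 1, r => by
    rw [← (Fin.snocEquiv fun _ => Fin K).sum_comp, Fintype.sum_prod_type_right]
    show ∑ b, ∑ k, viewProb π r (Fin.snoc b k) = 1
    simp only [viewProb_snoc, ← mul_sum, (hπ _ _).2, mul_one]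
    exact sum_viewProb hπ _

lemma viewProb_le_one (hπ : IsBPolicy π) {T : ℕ} (r : Fin T → ℝ) (a : Fin T → Fin K) :
    viewProb π r a ≤ 1 :=
  sum_viewProb hπ r ▸ single_le_sum (fun b _ => viewProb_nonneg hπ r b) (mem_univ a)

end ViewProb

theorem table_dp_of_view_dp {K T : ℕ} (π : BPolicy K) (hπ : IsBPolicy π) (ε δ : ℝ)
    (hview : IsDP (fun r : Fin T → ℝ => viewProb π r) Adjacent ε δ) :
    IsDP (fun d : Fin T → Fin K → ℝ => tableProb π d) Adjacent ε ((K : ℝ) ^ T * δ) := by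
  intro d d' hadj E
  obtain ⟨j, -⟩ := id hadj
  have hδ : 0 ≤ δ := hview.nonneg (adjacent_zero_single j)
  have hεδ : 1 ≤ Real.exp ε + δ :=
    hview.one_le_exp_add (adjacent_zero_single j) (sum_viewProb hπ _) (sum_viewProb hπ _)
  have hpoint : ∀ a, tableProb π d a ≤ Real.exp ε * tableProb π d' a + δ := by
    intro a
    rcases hadj.eq_or_adjacent_diag a with hr | hr
    · simp only [tableProb, hr]
      exact le_exp_mul_add_self hδ hεδ (viewProb_nonneg hπ _ a) (viewProb_le_one hπ _ a)
    · simpa [tableProb] using hview _ _ hr {a}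
  simpa [Fintype.card_fun] using sum_le_exp_mul_sum_add_card_mul hδ hpoint E
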